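/- arXiv:1103.0796 — 4 statements merged into one kernel-verified Lean document; each statement's English description precedes it below -/
import Mathlib

section
/- Let C > 0 and γ > 1 be real numbers, let t₀ < β be real numbers, and let Y : [t₀, β) → ℝ be a differentiable function with Y(t) > 0 for all t ∈ [t₀, β), satisfying Y′(t) ≤ C·Y(t)^γ on [t₀, β). Assume Y(s) → +∞ as s → β from the left. Then β − t₀ ≥ Y(t₀)^{1−γ} / ((γ−1)·C). Equivalently, C·(γ−1)·(β − t₀) ≥ (Y(t₀))^{1−γ}, i.e. (β − t₀)^{−1/(γ−1)} ≤ ((γ−1)C)^{1/(γ−1)} · Y(t₀). -/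
/-!
Since `γ > 1`, the inequality `Y' ≤ C Y^γ` says exactly that `t ↦ Y(t)^{1-γ} + (γ-1) C t` is
nondecreasing on `[t₀, β)`. Its value at `t₀` is thus at most its limit at `β⁻`, which is
`(γ-1) C β` because `Y^{1-γ} → 0` as `Y → +∞`.
-/

open Set Filter Topology

theorem one_sub_mul_le_deriv_rpow_one_sub {y y' C γ : ℝ} (hy : 0 < y) (hγ : 1 ≤ γ)
    (h : y' ≤ C * y ^ γ) : (1 - γ) * C ≤ y' * (1 - γ) * y ^ (1 - γ - 1) := by
  have hy' : y' * y ^ (-γ) ≤ C :=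
    calc y' * y ^ (-γ) ≤ C * y ^ γ * y ^ (-γ) :=
          mul_le_mul_of_nonneg_right h (Real.rpow_nonneg hy.le _)
      _ = C := by rw [mul_assoc, ← Real.rpow_add hy, add_neg_cancel, Real.rpow_zero, mul_one]
  calc (1 - γ) * C ≤ (1 - γ) * (y' * y ^ (-γ)) := mul_le_mul_of_nonpos_left hy' (by linarith)
    _ = y' * (1 - γ) * y ^ (1 - γ - 1) := by rw [sub_sub_cancel_left]; ring

theorem monotoneOn_rpow_one_sub_add_mul {s : Set ℝ} (hs : Convex ℝ s) {Y Y' : ℝ → ℝ}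
    {C γ : ℝ} (hγ : 1 ≤ γ) (hderiv : ∀ t ∈ s, HasDerivWithinAt Y (Y' t) s t)
    (hpos : ∀ t ∈ s, 0 < Y t) (hineq : ∀ t ∈ s, Y' t ≤ C * Y t ^ γ) :
    MonotoneOn (fun t => Y t ^ (1 - γ) + (γ - 1) * C * t) s := by
  have hW : ∀ t ∈ s, HasDerivWithinAt (fun t => Y t ^ (1 - γ) + (γ - 1) * C * t)
      (Y' t * (1 - γ) * Y t ^ (1 - γ - 1) + (γ - 1) * C) s t := fun t ht =>
    ((hderiv t ht).rpow_const (Or.inl (hpos t ht).ne')).add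
      ((hasDerivWithinAt_id t s).const_mul _ |>.congr_deriv (mul_one _))
  refine monotoneOn_of_hasDerivWithinAt_nonneg hs (fun t ht => (hW t ht).continuousWithinAt)
    (fun t ht => (hW t (interior_subset ht)).mono interior_subset) fun t ht => ?_
  have := one_sub_mul_le_deriv_rpow_one_sub (hpos t (interior_subset ht)) hγ
    (hineq t (interior_subset ht))
  linarith

theorem Filter.Tendsto.rpow_one_sub_atTop {α : Type*} {l : Filter α} {Y : α → ℝ} {γ : ℝ}
    (hY : Tendsto Y l atTop) (hγ : 1 < γ) : Tendsto (fun t => Y t ^ (1 - γ)) l (𝓝 0) := by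
  simpa only [neg_sub, Function.comp_def] using (tendsto_rpow_neg_atTop (sub_pos.mpr hγ)).comp hY

/-- Lower bound on the blow-up time: if `Y > 0` satisfies `Y′ ≤ C Y^γ` on
`[t₀, β)` with `γ > 1` and `Y(s) → +∞` as `s → β⁻`, then
`β - t₀ ≥ Y(t₀)^{1-γ} / ((γ-1) C)`. -/
theorem blowup_time_lower_bound
    (C γ t₀ β : ℝ) (hC : 0 < C) (hγ : 1 < γ) (htβ : t₀ < β)
    (Y Y' : ℝ → ℝ)
    (hderiv : ∀ t ∈ Ico t₀ β, HasDerivWithinAt Y (Y' t) (Ico t₀ β) t)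
    (hpos : ∀ t ∈ Ico t₀ β, 0 < Y t)
    (hineq : ∀ t ∈ Ico t₀ β, Y' t ≤ C * Y t ^ γ)
    (hblow : Tendsto Y (nhdsWithin β (Iio β)) atTop) :
    Y t₀ ^ (1 - γ) / ((γ - 1) * C) ≤ β - t₀ := by
  set K := (γ - 1) * C
  have hmono := monotoneOn_rpow_one_sub_add_mul (convex_Ico t₀ β) hγ.le hderiv hpos hineq
  have hlim : Tendsto (fun t => Y t ^ (1 - γ) + K * t) (𝓝[<] β) (𝓝 (0 + K * β)) :=
    (hblow.rpow_one_sub_atTop hγ).add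
      (tendsto_nhdsWithin_of_tendsto_nhds ((continuous_const_mul K).tendsto β))
  have hbound : Y t₀ ^ (1 - γ) + K * t₀ ≤ 0 + K * β := by
    refine ge_of_tendsto hlim ?_
    filter_upwards [Ioo_mem_nhdsLT htβ] with t ht
    exact hmono (left_mem_Ico.mpr htβ) (Ioo_subset_Ico_self ht) ht.1.le
  rw [div_le_iff₀ (mul_pos (sub_pos.mpr hγ) hC)]
  linarith
end

section
/- Let T > 0, let I be a countable index set, and let ((α_i, β_i))_{i∈I} be a family of pairwise disjoint nonempty open intervals contained in (0,T). Let h : (0,T) → ℝ be a nonnegative Lebesgue-integrable function, let C > 0 and 0 < p < 1 be real numbers, and assume that for every i ∈ I and every t ∈ (α_i, β_i) one has C·(β_i − t)^{−p} ≤ 1 + h(t). Then (C/(1−p)) · Σ_{i∈I} (β_i − α_i)^{1−p} ≤ T + ∫₀ᵀ h(t) dt; in particular Σ_{i∈I} (β_i − α_i)^{1−p} < ∞. -/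
/-! Integrating `C (βᵢ - t)^{-p} ≤ 1 + h(t)` over `(αᵢ, βᵢ)` gives
`(C/(1-p)) (βᵢ - αᵢ)^{1-p} ≤ ∫_{αᵢ}^{βᵢ} (1 + h)`, the integral converging because `p < 1`.
Since the intervals are disjoint and `1 + h ≥ 0`, every finite partial sum is then at most
`∫₀ᵀ (1 + h) = T + ∫₀ᵀ h`. -/

open Set MeasureTheory

section DisjointSetIntegrals

variable {α ι : Type*} [MeasurableSpace α] {μ : Measure α} {f : α → ℝ} {S : Set α}
  {s : ι → Set α}

theorem sum_setIntegral_le_setIntegral_of_pairwise_disjoint (hf : IntegrableOn f S μ)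
    (hf₀ : 0 ≤ᵐ[μ.restrict S] f) (hs : ∀ i, MeasurableSet (s i)) (hsS : ∀ i, s i ⊆ S)
    (hdisj : Pairwise (Function.onFun Disjoint s)) (F : Finset ι) :
    ∑ i ∈ F, ∫ x in s i, f x ∂μ ≤ ∫ x in S, f x ∂μ := by
  rw [← integral_biUnion_finset F (fun i _ => hs i) (hdisj.set_pairwise _)
    (fun i _ => hf.mono_set (hsS i))]
  exact setIntegral_mono_set hf hf₀
    (Filter.Eventually.of_forall (iUnion₂_subset fun i _ => hsS i))

theorem summable_and_tsum_le_setIntegral_of_pairwise_disjoint {c : ι → ℝ} (hc₀ : ∀ i, 0 ≤ c i)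
    (hc : ∀ i, c i ≤ ∫ x in s i, f x ∂μ) (hf : IntegrableOn f S μ)
    (hf₀ : 0 ≤ᵐ[μ.restrict S] f) (hs : ∀ i, MeasurableSet (s i)) (hsS : ∀ i, s i ⊆ S)
    (hdisj : Pairwise (Function.onFun Disjoint s)) :
    Summable c ∧ ∑' i, c i ≤ ∫ x in S, f x ∂μ := by
  have hsum (F : Finset ι) : ∑ i ∈ F, c i ≤ ∫ x in S, f x ∂μ :=
    (Finset.sum_le_sum fun i _ => hc i).trans
      (sum_setIntegral_le_setIntegral_of_pairwise_disjoint hf hf₀ hs hsS hdisj F)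
  have hc_sum : Summable c := summable_of_sum_le hc₀ hsum
  exact ⟨hc_sum, hc_sum.tsum_le_of_sum_le hsum⟩

end DisjointSetIntegrals

section RpowNegSub

variable {a b p : ℝ}

theorem intervalIntegrable_rpow_neg_sub (hp : p < 1) :
    IntervalIntegrable (fun t => (b - t) ^ (-p)) volume a b := by
  have h := (intervalIntegral.intervalIntegrable_rpow' (r := -p) (a := b - a) (b := b - b)
    (by linarith)).comp_sub_left b
  simpa only [sub_sub_cancel] using h

theorem integral_rpow_neg_sub (hp : p < 1) :
    ∫ t in a..b, (b - t) ^ (-p) = (b - a) ^ (1 - p) / (1 - p) := by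
  rw [intervalIntegral.integral_comp_sub_left (fun x : ℝ => x ^ (-p)), sub_self,
    integral_rpow (Or.inl (by linarith)), Real.zero_rpow (by linarith), neg_add_eq_sub, sub_zero]

theorem setIntegral_Ioo_rpow_neg_sub (hab : a ≤ b) (hp : p < 1) :
    ∫ t in Ioo a b, (b - t) ^ (-p) = (b - a) ^ (1 - p) / (1 - p) := by
  rw [← integral_Ioc_eq_integral_Ioo, ← intervalIntegral.integral_of_le hab,
    integral_rpow_neg_sub hp]

theorem integrableOn_Ioo_rpow_neg_sub (hab : a ≤ b) (hp : p < 1) :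
    IntegrableOn (fun t => (b - t) ^ (-p)) (Ioo a b) :=
  ((intervalIntegrable_iff_integrableOn_Ioc_of_le hab).mp
    (intervalIntegrable_rpow_neg_sub hp)).mono_set Ioo_subset_Ioc_self

end RpowNegSub

theorem interval_length_power_sum_general
    {I : Type*}
    (T C p : ℝ) (hT : 0 < T) (hC : 0 < C) (hp1 : p < 1)
    (a b : I → ℝ) (hab : ∀ i, a i < b i)
    (hsub : ∀ i, Ioo (a i) (b i) ⊆ Ioo 0 T)
    (hdisj : Pairwise (Function.onFun Disjoint fun i => Ioo (a i) (b i)))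
    (h : ℝ → ℝ) (hint : IntegrableOn h (Ioo 0 T))
    (hnonneg : ∀ t ∈ Ioo (0 : ℝ) T, 0 ≤ h t)
    (hbound : ∀ i, ∀ t ∈ Ioo (a i) (b i), C * (b i - t) ^ (-p) ≤ 1 + h t) :
    Summable (fun i => (b i - a i) ^ (1 - p)) ∧
      (C / (1 - p)) * ∑' i, (b i - a i) ^ (1 - p) ≤ T + ∫ t in Ioo (0 : ℝ) T, h t := by
  have hK : 0 < C / (1 - p) := div_pos hC (sub_pos.2 hp1)
  have hone : IntegrableOn (fun _ => (1 : ℝ)) (Ioo 0 T) :=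
    integrableOn_const measure_Ioo_lt_top.ne
  have hint₁ : IntegrableOn (fun t => 1 + h t) (Ioo 0 T) := hone.add hint
  have hpiece (i : I) :
      C / (1 - p) * (b i - a i) ^ (1 - p) ≤ ∫ t in Ioo (a i) (b i), 1 + h t := by
    calc C / (1 - p) * (b i - a i) ^ (1 - p)
        = ∫ t in Ioo (a i) (b i), C * (b i - t) ^ (-p) := by
          rw [integral_const_mul, setIntegral_Ioo_rpow_neg_sub (hab i).le hp1]; ring
      _ ≤ ∫ t in Ioo (a i) (b i), 1 + h t :=
          setIntegral_mono_on ((integrableOn_Ioo_rpow_neg_sub (hab i).le hp1).const_mul C)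
            (hint₁.mono_set (hsub i)) measurableSet_Ioo (hbound i)
  have htotal : ∫ t in Ioo (0 : ℝ) T, 1 + h t = T + ∫ t in Ioo (0 : ℝ) T, h t := by
    rw [integral_add hone hint, setIntegral_const,
      measureReal_def, Real.volume_Ioo, sub_zero, ENNReal.toReal_ofReal hT.le, smul_eq_mul, mul_one]
  obtain ⟨hsummable, htsum⟩ := summable_and_tsum_le_setIntegral_of_pairwise_disjoint
    (fun i => mul_nonneg hK.le (Real.rpow_nonneg (sub_pos.2 (hab i)).le _)) hpiece hint₁
    ((ae_restrict_iff' measurableSet_Ioo).2 (.of_forall fun t ht => by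
      simpa using add_nonneg zero_le_one (hnonneg t ht)))
    (fun _ => measurableSet_Ioo) hsub hdisj
  rw [tsum_mul_left, htotal] at htsum
  exact ⟨(summable_mul_left_iff hK.ne').1 hsummable, htsum⟩

/-- If pairwise disjoint intervals `(αᵢ, βᵢ) ⊆ (0,T)` satisfy
`C (βᵢ - t)^{-p} ≤ 1 + h(t)` on each `(αᵢ, βᵢ)` for an integrable nonnegative
`h`, then `(C/(1-p)) Σᵢ (βᵢ - αᵢ)^{1-p} ≤ T + ∫₀ᵀ h`; in particular the sum
`Σᵢ (βᵢ - αᵢ)^{1-p}` is finite. -/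
theorem interval_length_power_sum
    {I : Type*} [Countable I]
    (T C p : ℝ) (hT : 0 < T) (hC : 0 < C) (hp0 : 0 < p) (hp1 : p < 1)
    (a b : I → ℝ) (hab : ∀ i, a i < b i)
    (hsub : ∀ i, Ioo (a i) (b i) ⊆ Ioo 0 T)
    (hdisj : Pairwise (Function.onFun Disjoint fun i => Ioo (a i) (b i)))
    (h : ℝ → ℝ) (hint : IntegrableOn h (Ioo 0 T))
    (hnonneg : ∀ t ∈ Ioo (0 : ℝ) T, 0 ≤ h t)
    (hbound : ∀ i, ∀ t ∈ Ioo (a i) (b i), C * (b i - t) ^ (-p) ≤ 1 + h t) :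
    Summable (fun i => (b i - a i) ^ (1 - p)) ∧
      (C / (1 - p)) * ∑' i, (b i - a i) ^ (1 - p) ≤ T + ∫ t in Ioo (0 : ℝ) T, h t :=
  interval_length_power_sum_general T C p hT hC hp1 a b hab hsub hdisj h hint hnonneg hbound
end

section
/- Let T > 0 and 0 < δ ≤ 1 be real numbers, let I be a countable index set, and let ((α_i, β_i))_{i∈I} be a family of pairwise disjoint nonempty open intervals contained in (0,T). Define S = [0,T] \ ⋃_{i∈I} (α_i, β_i). Assume that S has one-dimensional Lebesgue measure zero and that Σ_{i∈I} (β_i − α_i)^δ < ∞. Then the δ-dimensional Hausdorff measure of S is zero. -/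
/-!
For a finite subfamily `F`, the points of `[0,T]` outside the intervals indexed by `F` lie in
finitely many pairwise disjoint closed gaps. Since `S` is null, each gap is covered up to a null
set by the intervals `i ∉ F` contained in it, so its length is at most the sum of theirs, and as
`t ↦ t ^ δ` is subadditive for `δ ≤ 1`, the same holds for `δ`-th powers. Hence the gaps cover `S`
with `δ`-sum at most the tail `∑_{i ∉ F} (b i - a i) ^ δ`, which tends to `0` as `F` grows.
-/

open Set MeasureTheory Filter Topology
open scoped ENNReal

theorem ENNReal.rpow_tsum_le_tsum_rpow {ι : Type*} {p : ℝ} (hp0 : 0 < p) (hp1 : p ≤ 1)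
    (f : ι → ℝ≥0∞) : (∑' i, f i) ^ p ≤ ∑' i, f i ^ p := by
  refine le_of_tendsto' (ENNReal.summable.hasSum.ennrpow_const p) fun s => ?_
  calc (∑ i ∈ s, f i) ^ p ≤ ∑ i ∈ s, f i ^ p :=
        Finset.le_sum_of_subadditive (· ^ p) (ENNReal.zero_rpow_of_pos hp0).le
          (fun x y => ENNReal.rpow_add_le_add_rpow x y hp0.le hp1) s f
    _ ≤ ∑' i, f i ^ p := ENNReal.sum_le_tsum s

theorem MeasureTheory.measure_rpow_le_tsum_rpow_of_subset_union_null {α ι : Type*}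
    [MeasurableSpace α] [Countable ι] (μ : Measure α) {p : ℝ} (hp0 : 0 < p) (hp1 : p ≤ 1)
    {s N : Set α} {t : ι → Set α} (hN : μ N = 0) (hs : s ⊆ N ∪ ⋃ i, t i) :
    μ s ^ p ≤ ∑' i, μ (t i) ^ p :=
  calc μ s ^ p ≤ (∑' i, μ (t i)) ^ p := by
        gcongr
        calc μ s ≤ μ N + μ (⋃ i, t i) := (measure_mono hs).trans (measure_union_le _ _)
          _ ≤ ∑' i, μ (t i) := by rw [hN, zero_add]; exact measure_iUnion_le t
    _ ≤ ∑' i, μ (t i) ^ p := ENNReal.rpow_tsum_le_tsum_rpow hp0 hp1 _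

theorem MeasureTheory.Measure.hausdorffMeasure_eq_zero_of_tendsto_tsum {X β : Type*}
    [EMetricSpace X] [MeasurableSpace X] [BorelSpace X] {d : ℝ} (hd : 0 < d) {s : Set X}
    {l : Filter β} [l.NeBot] {ι : β → Type*} [∀ n, Countable (ι n)] (t : ∀ n, ι n → Set X)
    (hst : ∀ᶠ n in l, s ⊆ ⋃ i, t n i)
    (ht : Tendsto (fun n => ∑' i, Metric.ediam (t n i) ^ d) l (𝓝 0)) : μH[d] s = 0 := by
  have hr : Tendsto (fun n => (∑' i, Metric.ediam (t n i) ^ d) ^ d⁻¹) l (𝓝 0) := by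
    simpa [ENNReal.zero_rpow_of_pos (inv_pos.2 hd)] using ht.ennrpow_const d⁻¹
  have hdiam : ∀ n i, Metric.ediam (t n i) ≤ (∑' i, Metric.ediam (t n i) ^ d) ^ d⁻¹ :=
    fun n i => (ENNReal.le_rpow_inv_iff hd).2 (ENNReal.le_tsum i)
  refine le_antisymm ?_ zero_le
  calc μH[d] s ≤ liminf (fun n => ∑' i, Metric.ediam (t n i) ^ d) l :=
        hausdorffMeasure_le_liminf_tsum d s _ hr t (.of_forall hdiam) hst
    _ = 0 := ht.liminf_eq

noncomputable section

namespace IntervalGaps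

variable {I : Type*} (a b : I → ℝ) (T : ℝ) (F : Finset I)

-- The gaps left in `[0,T]` by the intervals indexed by `F` are `Icc c (gapEnd a T F c)` for
-- `c ∈ gapStarts b F`: each gap starts at `0` or at a right endpoint `b j`, `j ∈ F`, and ends at
-- the next left endpoint `a i`, `i ∈ F`, or at `T`.
def gapStarts : Finset ℝ := insert 0 (F.image b)

def gapEnd (c : ℝ) : ℝ :=
  (insert T ((F.filter (c ≤ a ·)).image a)).min' (Finset.insert_nonempty _ _)

variable {a b T F}

theorem le_gapEnd_iff {c x : ℝ} : x ≤ gapEnd a T F c ↔ x ≤ T ∧ ∀ i ∈ F, c ≤ a i → x ≤ a i := by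
  simp only [gapEnd, Finset.le_min'_iff, Finset.mem_insert, Finset.mem_image, Finset.mem_filter,
    forall_eq_or_imp, forall_exists_index, and_imp]
  exact and_congr_right fun _ =>
    ⟨fun h i hi hc => h _ i hi hc rfl, fun h _ i hi hc hx => hx ▸ h i hi hc⟩

theorem gapEnd_le_of_mem {c : ℝ} {i : I} (hi : i ∈ F) (hc : c ≤ a i) : gapEnd a T F c ≤ a i :=
  (le_gapEnd_iff.1 le_rfl).2 i hi hc

theorem gapEnd_le {c : ℝ} : gapEnd a T F c ≤ T := (le_gapEnd_iff.1 le_rfl).1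

theorem pairwise_le_or_le_of_pairwise_disjoint_Ioo (hab : ∀ i, a i < b i)
    (hdisj : Pairwise (Function.onFun Disjoint fun i => Ioo (a i) (b i))) :
    Pairwise fun i j => b i ≤ a j ∨ b j ≤ a i := by
  intro i j hij
  have h := Set.Ioo_disjoint_Ioo.1 (hdisj hij)
  rw [min_le_iff, le_max_iff, le_max_iff] at h
  have := hab i; have := hab j
  rcases h with (h | h) | (h | h) <;> first | (left; linarith) | (right; linarith)

theorem le_or_le_of_mem_gapStarts (hab : ∀ i, a i < b i)
    (hsep : Pairwise fun i j => b i ≤ a j ∨ b j ≤ a i) (ha0 : ∀ i, 0 ≤ a i) {c : ℝ}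
    (hc : c ∈ gapStarts b F) (i : I) : b i ≤ c ∨ c ≤ a i := by
  rcases Finset.mem_insert.1 hc with rfl | hc
  · exact .inr (ha0 i)
  · obtain ⟨j, -, rfl⟩ := Finset.mem_image.1 hc
    rcases eq_or_ne i j with rfl | hij
    · exact .inl le_rfl
    · exact (hsep hij).imp (fun h => h.trans (hab j).le) id

theorem nonneg_of_mem_gapStarts (hab : ∀ i, a i < b i) (ha0 : ∀ i, 0 ≤ a i) {c : ℝ}
    (hc : c ∈ gapStarts b F) : 0 ≤ c := by
  rcases Finset.mem_insert.1 hc with rfl | hc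
  · exact le_rfl
  · obtain ⟨j, -, rfl⟩ := Finset.mem_image.1 hc
    exact (ha0 j).trans (hab j).le

theorem gapStarts_pairwiseDisjoint (hab : ∀ i, a i < b i)
    (hsep : Pairwise fun i j => b i ≤ a j ∨ b j ≤ a i) (ha0 : ∀ i, 0 ≤ a i) :
    (gapStarts b F : Set ℝ).PairwiseDisjoint fun c => Icc c (gapEnd a T F c) := by
  have key : ∀ c ∈ gapStarts b F, ∀ c' ∈ gapStarts b F, c < c' → gapEnd a T F c < c' := by
    intro c hc c' hc' hlt
    rcases Finset.mem_insert.1 hc' with rfl | hc'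
    · exact absurd hlt (nonneg_of_mem_gapStarts hab ha0 hc).not_gt
    · obtain ⟨j, hj, rfl⟩ := Finset.mem_image.1 hc'
      have hcj : c ≤ a j :=
        (le_or_le_of_mem_gapStarts hab hsep ha0 hc j).resolve_left hlt.not_ge
      exact (gapEnd_le_of_mem hj hcj).trans_lt (hab j)
  intro c hc c' hc' hne
  rcases hne.lt_or_gt with h | h
  · exact Set.disjoint_left.2 fun x hx hx' => (hx.2.trans_lt (key c hc c' hc' h)).not_ge hx'.1
  · exact Set.disjoint_right.2 fun x hx' hx => (hx'.2.trans_lt (key c' hc' c hc h)).not_ge hx.1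

theorem disjoint_Ioo_gap {c : ℝ} {i : I} (hi : i ∈ F) (hc : b i ≤ c ∨ c ≤ a i) :
    Disjoint (Ioo (a i) (b i)) (Icc c (gapEnd a T F c)) := by
  refine Set.disjoint_left.2 fun x hxi hx => ?_
  rcases hc with h | h
  · linarith [hxi.2, hx.1]
  · linarith [hxi.1, hx.2, gapEnd_le_of_mem (T := T) hi h]

theorem Ioo_subset_gap (hab : ∀ i, a i < b i) (hsep : Pairwise fun i j => b i ≤ a j ∨ b j ≤ a i)
    {c : ℝ} (hc : ∀ j, b j ≤ c ∨ c ≤ a j) {i : I} (hi : i ∉ F) (hbT : b i ≤ T) {x : ℝ}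
    (hxi : x ∈ Ioo (a i) (b i)) (hx : x ∈ Icc c (gapEnd a T F c)) :
    Ioo (a i) (b i) ⊆ Icc c (gapEnd a T F c) := by
  have hca : c ≤ a i := (hc i).resolve_left fun h => (hxi.2.trans_le (h.trans hx.1)).false
  have hbg : b i ≤ gapEnd a T F c := by
    refine le_gapEnd_iff.2 ⟨hbT, fun j hj hcj => ?_⟩
    have hij : i ≠ j := fun h => hi (h ▸ hj)
    refine (hsep hij).resolve_right fun h => ?_
    linarith [hx.2, gapEnd_le_of_mem (T := T) hj hcj, hab j, hxi.1]
  exact fun y hy => ⟨hca.trans hy.1.le, hy.2.le.trans hbg⟩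

theorem gap_subset_union (hab : ∀ i, a i < b i) (hsep : Pairwise fun i j => b i ≤ a j ∨ b j ≤ a i)
    (hbT : ∀ i, b i ≤ T) {c : ℝ} (hc0 : 0 ≤ c) (hc : ∀ i, b i ≤ c ∨ c ≤ a i) :
    Icc c (gapEnd a T F c) ⊆ (Icc 0 T \ ⋃ i, Ioo (a i) (b i)) ∪
      ⋃ i : {i | i ∉ F ∧ Ioo (a i) (b i) ⊆ Icc c (gapEnd a T F c)}, Ioo (a i) (b i) := by
  intro x hx
  by_cases hxU : x ∈ ⋃ i, Ioo (a i) (b i)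
  · obtain ⟨i, hxi⟩ := mem_iUnion.1 hxU
    have hiF : i ∉ F := fun hiF => Set.disjoint_left.1 (disjoint_Ioo_gap hiF (hc i)) hxi hx
    exact .inr (mem_iUnion.2 ⟨⟨i, hiF, Ioo_subset_gap hab hsep hc hiF (hbT i) hxi hx⟩, hxi⟩)
  · exact .inl ⟨⟨hc0.trans hx.1, hx.2.trans gapEnd_le⟩, hxU⟩

theorem exists_mem_gapStarts_mem_gap (hab : ∀ i, a i < b i) {x : ℝ} (hx : x ∈ Icc 0 T)
    (hxF : ∀ i ∈ F, x ∉ Ioo (a i) (b i)) :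
    ∃ c ∈ gapStarts b F, x ∈ Icc c (gapEnd a T F c) := by
  set L := (gapStarts b F).filter (· ≤ x)
  have hL : L.Nonempty := ⟨0, Finset.mem_filter.2 ⟨Finset.mem_insert_self _ _, hx.1⟩⟩
  obtain ⟨hcS, hcx⟩ := Finset.mem_filter.1 (L.max'_mem hL)
  refine ⟨L.max' hL, hcS, hcx, le_gapEnd_iff.2 ⟨hx.2, fun i hi hci => ?_⟩⟩
  by_contra! hxa
  have hbx : b i ≤ x := not_lt.1 fun hxb => hxF i hi ⟨hxa, hxb⟩
  have : b i ≤ L.max' hL := L.le_max' _ <|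
    Finset.mem_filter.2 ⟨Finset.mem_insert_of_mem (Finset.mem_image_of_mem b hi), hbx⟩
  linarith [hab i]

theorem tsum_ediam_gap_rpow_le [Countable I] {δ : ℝ} (hδ0 : 0 < δ) (hδ1 : δ ≤ 1)
    (hab : ∀ i, a i < b i) (hsep : Pairwise fun i j => b i ≤ a j ∨ b j ≤ a i)
    (hends : ∀ i, 0 ≤ a i ∧ b i ≤ T)
    (hnull : volume (Icc (0 : ℝ) T \ ⋃ i, Ioo (a i) (b i)) = 0) (F : Finset I) :
    ∑' c : gapStarts b F, Metric.ediam (Icc (c : ℝ) (gapEnd a T F c)) ^ δ ≤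
      ∑' i : {i // i ∉ F}, ENNReal.ofReal (b i - a i) ^ δ := by
  set J : gapStarts b F → Set I :=
    fun c => {i | i ∉ F ∧ Ioo (a i) (b i) ⊆ Icc (c : ℝ) (gapEnd a T F c)}
  have hgap (c : gapStarts b F) :
      Metric.ediam (Icc (c : ℝ) (gapEnd a T F c)) ^ δ ≤
        ∑' i : J c, ENNReal.ofReal (b i - a i) ^ δ := by
    rw [Real.ediam_Icc, ← Real.volume_Icc]
    simp_rw [← Real.volume_Ioo]
    exact measure_rpow_le_tsum_rpow_of_subset_union_null volume hδ0 hδ1 hnull <|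
      gap_subset_union hab hsep (fun i => (hends i).2)
        (nonneg_of_mem_gapStarts hab (fun i => (hends i).1) c.2)
        (le_or_le_of_mem_gapStarts hab hsep (fun i => (hends i).1) c.2)
  have hJ : (univ : Set (gapStarts b F)).PairwiseDisjoint J := by
    intro c _ c' _ hne
    refine Set.disjoint_left.2 fun i hi hi' => ?_
    obtain ⟨x, hx⟩ := nonempty_Ioo.2 (hab i)
    exact Set.disjoint_left.1 (gapStarts_pairwiseDisjoint hab hsep (fun i => (hends i).1) c.2 c'.2
      (Subtype.coe_ne_coe.2 hne)) (hi.2 hx) (hi'.2 hx)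
  set ℓ : I → ℝ≥0∞ := fun i => ENNReal.ofReal (b i - a i) ^ δ
  calc _ ≤ ∑' c, ∑' i : J c, ℓ i := ENNReal.tsum_le_tsum hgap
    _ = ∑' i : ⋃ c, J c, ℓ i := (ENNReal.tsum_biUnion hJ).symm
    _ ≤ ∑' i : {i | i ∉ F}, ℓ i :=
      ENNReal.tsum_mono_subtype ℓ (iUnion_subset fun c i (hi : i ∈ J c) => hi.1)

end IntervalGaps

end

open IntervalGaps

theorem hausdorff_measure_of_complement_of_intervals_general
    {I : Type*} [Countable I]
    (T δ : ℝ) (hδ0 : 0 < δ) (hδ1 : δ ≤ 1)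
    (a b : I → ℝ) (hab : ∀ i, a i < b i)
    (hsub : ∀ i, Ioo (a i) (b i) ⊆ Ioo 0 T)
    (hdisj : Pairwise (Function.onFun Disjoint fun i => Ioo (a i) (b i)))
    (hnull : volume (Icc (0 : ℝ) T \ ⋃ i, Ioo (a i) (b i)) = 0)
    (hsum : Summable fun i => (b i - a i) ^ δ) :
    μH[δ] (Icc (0 : ℝ) T \ ⋃ i, Ioo (a i) (b i)) = 0 := by
  have hends (i : I) : 0 ≤ a i ∧ b i ≤ T := (Ioo_subset_Ioo_iff (hab i)).1 (hsub i)
  have hfin : ∑' i, ENNReal.ofReal (b i - a i) ^ δ ≠ ∞ := by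
    simp_rw [ENNReal.ofReal_rpow_of_nonneg (sub_nonneg.2 (hab _).le) hδ0.le]
    rw [← ENNReal.ofReal_tsum_of_nonneg (fun i => Real.rpow_nonneg (sub_nonneg.2 (hab i).le) δ)
      hsum]
    exact ENNReal.ofReal_ne_top
  refine Measure.hausdorffMeasure_eq_zero_of_tendsto_tsum hδ0 (l := atTop)
    (fun F (c : gapStarts b F) => Icc (c : ℝ) (gapEnd a T F c)) (.of_forall fun F x hx => ?_) ?_
  · obtain ⟨c, hc, hxc⟩ :=
      exists_mem_gapStarts_mem_gap hab hx.1 fun i _ hxi => hx.2 (mem_iUnion_of_mem i hxi)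
    exact mem_iUnion.2 ⟨⟨c, hc⟩, hxc⟩
  · exact tendsto_of_tendsto_of_tendsto_of_le_of_le tendsto_const_nhds
      (ENNReal.tendsto_tsum_compl_atTop_zero hfin) (fun _ => zero_le)
      (tsum_ediam_gap_rpow_le hδ0 hδ1 hab (pairwise_le_or_le_of_pairwise_disjoint_Ioo hab hdisj)
        hends hnull)

/-- If `S = [0,T] \ ⋃ᵢ (αᵢ, βᵢ)` is Lebesgue-null, where the `(αᵢ, βᵢ)` are
pairwise disjoint nonempty open subintervals of `(0,T)`, and
`Σᵢ (βᵢ - αᵢ)^δ < ∞` with `0 < δ ≤ 1`, then the `δ`-dimensional Hausdorff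
measure of `S` is zero. -/
theorem hausdorff_measure_of_complement_of_intervals
    {I : Type*} [Countable I]
    (T δ : ℝ) (hT : 0 < T) (hδ0 : 0 < δ) (hδ1 : δ ≤ 1)
    (a b : I → ℝ) (hab : ∀ i, a i < b i)
    (hsub : ∀ i, Ioo (a i) (b i) ⊆ Ioo 0 T)
    (hdisj : Pairwise (Function.onFun Disjoint fun i => Ioo (a i) (b i)))
    (hnull : volume (Icc (0 : ℝ) T \ ⋃ i, Ioo (a i) (b i)) = 0)
    (hsum : Summable fun i => (b i - a i) ^ δ) :
    μH[δ] (Icc (0 : ℝ) T \ ⋃ i, Ioo (a i) (b i)) = 0 :=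
  hausdorff_measure_of_complement_of_intervals_general T δ hδ0 hδ1 a b hab hsub hdisj hnull hsum
end

section
/- Let T > 0, C > 0 and 0 < p < 1 be real numbers, let I be a countable index set, and let ((α_i, β_i))_{i∈I} be a family of pairwise disjoint nonempty open intervals contained in (0,T). Let h : (0,T) → ℝ be a nonnegative Lebesgue-integrable function, and assume: (a) for every i ∈ I and every t ∈ (α_i, β_i), C·(β_i − t)^{−p} ≤ 1 + h(t); and (b) the set S = [0,T] \ ⋃_{i∈I} (α_i, β_i) has one-dimensional Lebesgue measure zero. Then the (1−p)-dimensional Hausdorff measure of S is zero. -/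
/-!
Integrating `C (βᵢ - t)^{-p} ≤ 1 + h t` over `(αᵢ, βᵢ)` gives
`C/(1-p) · ℓᵢ^{1-p} ≤ ∫_{(αᵢ,βᵢ)} (1 + h)`, so the lengths `ℓᵢ = βᵢ - αᵢ` satisfy
`∑ ℓᵢ^{1-p} < ∞`. Fix a finite set `F` of indices and split `S` into pieces, two points lying in
the same piece when no interval of `F` lies between them. Since `S` is null, the diameter of a
piece is at most the total length of the intervals lying between two of its points; none of them
is in `F`, and no interval lies between points of two different pieces. As `x ↦ x^{1-p}` is
subadditive, the pieces cover `S` with `∑ diam^{1-p} ≤ ∑_{i ∉ F} ℓᵢ^{1-p}`, which tends to `0`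
as `F` grows.
-/

open Set MeasureTheory Filter Metric Function
open scoped ENNReal Topology

theorem ENNReal.tsum_rpow_le {ι : Type*} (f : ι → ℝ≥0∞) {q : ℝ} (hq0 : 0 < q) (hq1 : q ≤ 1) :
    (∑' i, f i) ^ q ≤ ∑' i, f i ^ q := by
  have hmono : Monotone fun x : ℝ≥0∞ => x ^ q := fun _ _ h => ENNReal.rpow_le_rpow h hq0.le
  rw [ENNReal.tsum_eq_iSup_sum, hmono.map_iSup_of_continuousAt
    ENNReal.continuous_rpow_const.continuousAt (ENNReal.zero_rpow_of_pos hq0)]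
  refine iSup_le fun s => le_trans ?_ (ENNReal.sum_le_tsum s)
  exact Finset.le_sum_of_subadditive (fun x : ℝ≥0∞ => x ^ q) (ENNReal.zero_rpow_of_pos hq0).le
    (fun x y => ENNReal.rpow_add_le_add_rpow x y hq0.le hq1) s f

theorem ENNReal.tsum_rpow_tsum_subtype_le {ι κ : Type*} (f : ι → ℝ≥0∞) {J : κ → Set ι}
    {A : Set ι} (hJ : Pairwise (Disjoint on J)) (hJA : ∀ k, J k ⊆ A) {q : ℝ} (hq0 : 0 < q)
    (hq1 : q ≤ 1) :
    ∑' k, (∑' i : J k, f i) ^ q ≤ ∑' i : A, f i ^ q :=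
  calc ∑' k, (∑' i : J k, f i) ^ q
      ≤ ∑' k, ∑' i : J k, f i ^ q := ENNReal.tsum_le_tsum fun _ => ENNReal.tsum_rpow_le _ hq0 hq1
    _ = ∑' i : ⋃ k, J k, f i ^ q :=
      (ENNReal.tsum_biUnion (f := fun i => f i ^ q) (hJ.set_pairwise univ)).symm
    _ ≤ ∑' i : A, f i ^ q := ENNReal.tsum_mono_subtype (fun i => f i ^ q) (iUnion_subset hJA)

theorem lintegral_Ioo_sub_rpow_neg {a b p : ℝ} (hab : a ≤ b) (hp : p < 1) :
    ∫⁻ t in Ioo a b, ENNReal.ofReal ((b - t) ^ (-p)) =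
      ENNReal.ofReal ((b - a) ^ (1 - p) / (1 - p)) := by
  have hint : IntervalIntegrable (fun t => (b - t) ^ (-p)) volume a b := by
    simpa using (intervalIntegral.intervalIntegrable_rpow' (a := b - a) (b := 0)
      (show -1 < -p by linarith)).comp_sub_left b
  have hval : ∫ t in a..b, (b - t) ^ (-p) = (b - a) ^ (1 - p) / (1 - p) := by
    rw [intervalIntegral.integral_comp_sub_left (fun x => x ^ (-p)) b, sub_self,
      integral_rpow (Or.inl (by linarith)), Real.zero_rpow (by linarith), sub_zero,
      neg_add_eq_sub]
  rw [← ofReal_integral_eq_lintegral_ofReal, ← integral_Ioc_eq_integral_Ioo,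
    ← intervalIntegral.integral_of_le hab, hval]
  · exact ((intervalIntegrable_iff_integrableOn_Ioc_of_le hab).1 hint).mono_set
      Ioo_subset_Ioc_self
  · exact (ae_restrict_of_forall_mem measurableSet_Ioo fun t ht =>
      Real.rpow_nonneg (sub_nonneg.2 ht.2.le) _)

theorem ofReal_mul_rpow_le_setLIntegral {a b C p : ℝ} {g : ℝ → ℝ} (hC : 0 ≤ C) (hab : a ≤ b)
    (hp : p < 1) (hg : ∀ t ∈ Ioo a b, C * (b - t) ^ (-p) ≤ g t) :
    ENNReal.ofReal (C / (1 - p)) * ENNReal.ofReal (b - a) ^ (1 - p) ≤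
      ∫⁻ t in Ioo a b, ENNReal.ofReal (g t) :=
  calc ENNReal.ofReal (C / (1 - p)) * ENNReal.ofReal (b - a) ^ (1 - p)
      = ENNReal.ofReal C * ENNReal.ofReal ((b - a) ^ (1 - p) / (1 - p)) := by
        rw [ENNReal.ofReal_rpow_of_nonneg (sub_nonneg.2 hab) (by linarith),
          ← ENNReal.ofReal_mul hC, ← ENNReal.ofReal_mul (div_nonneg hC (by linarith))]
        ring_nf
    _ = ∫⁻ t in Ioo a b, ENNReal.ofReal (C * (b - t) ^ (-p)) := by
        simp_rw [ENNReal.ofReal_mul hC]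
        rw [lintegral_const_mul' _ _ ENNReal.ofReal_ne_top, lintegral_Ioo_sub_rpow_neg hab hp]
    _ ≤ ∫⁻ t in Ioo a b, ENNReal.ofReal (g t) :=
        setLIntegral_mono' measurableSet_Ioo fun t ht => ENNReal.ofReal_le_ofReal (hg t ht)

section IntervalFamily

variable {I : Type*} {a b : I → ℝ}

theorem tsum_ofReal_sub_rpow_ne_top [Countable I] {s : Set ℝ} {C p : ℝ} {g : ℝ → ℝ} (hC : 0 < C)
    (hp : p < 1) (hab : ∀ i, a i < b i)
    (hsub : ∀ i, Ioo (a i) (b i) ⊆ s) (hdisj : Pairwise (Disjoint on fun i => Ioo (a i) (b i)))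
    (hg : IntegrableOn g s) (hbound : ∀ i, ∀ t ∈ Ioo (a i) (b i), C * (b i - t) ^ (-p) ≤ g t) :
    ∑' i, ENNReal.ofReal (b i - a i) ^ (1 - p) ≠ ∞ := by
  have hconst : ENNReal.ofReal (C / (1 - p)) ≠ 0 :=
    ENNReal.ofReal_ne_zero_iff.2 (div_pos hC (by linarith))
  have hle : ENNReal.ofReal (C / (1 - p)) * ∑' i, ENNReal.ofReal (b i - a i) ^ (1 - p) ≤
      ∫⁻ t in s, ENNReal.ofReal (g t) :=
    calc ENNReal.ofReal (C / (1 - p)) * ∑' i, ENNReal.ofReal (b i - a i) ^ (1 - p)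
        = ∑' i, ENNReal.ofReal (C / (1 - p)) * ENNReal.ofReal (b i - a i) ^ (1 - p) :=
          ENNReal.tsum_mul_left.symm
      _ ≤ ∑' i, ∫⁻ t in Ioo (a i) (b i), ENNReal.ofReal (g t) := ENNReal.tsum_le_tsum fun i =>
          ofReal_mul_rpow_le_setLIntegral hC.le (hab i).le hp (hbound i)
      _ = ∫⁻ t in ⋃ i, Ioo (a i) (b i), ENNReal.ofReal (g t) :=
          (lintegral_iUnion (fun _ => measurableSet_Ioo) hdisj _).symm
      _ ≤ ∫⁻ t in s, ENNReal.ofReal (g t) := lintegral_mono_set (iUnion_subset hsub)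
  exact (ENNReal.lt_top_of_mul_ne_top_right (hle.trans_lt hg.lintegral_lt_top).ne hconst).ne

def intervalsBetween (a b : I → ℝ) (P : Set ℝ) : Set I :=
  {i | ∃ x ∈ P, ∃ y ∈ P, x ≤ a i ∧ b i ≤ y}

theorem ofReal_sub_le_tsum_intervalsBetween [Countable I] {K P : Set ℝ} (hK : K.OrdConnected)
    (hnull : volume (K \ ⋃ i, Ioo (a i) (b i)) = 0) (hP : P ⊆ K \ ⋃ i, Ioo (a i) (b i))
    {x y : ℝ} (hx : x ∈ P) (hy : y ∈ P) :
    ENNReal.ofReal (y - x) ≤ ∑' i : intervalsBetween a b P, ENNReal.ofReal (b i - a i) := by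
  have hcover : Icc x y ⊆
      (K \ ⋃ i, Ioo (a i) (b i)) ∪ ⋃ i : intervalsBetween a b P, Ioo (a i) (b i) := by
    intro z hz
    by_cases hzU : z ∈ ⋃ i, Ioo (a i) (b i)
    · obtain ⟨i, hi⟩ := mem_iUnion.1 hzU
      refine Or.inr (mem_iUnion.2 ⟨⟨i, x, hx, y, hy, ?_, ?_⟩, hi⟩)
      · by_contra! h
        exact (hP hx).2 (mem_iUnion.2 ⟨i, h, hz.1.trans_lt hi.2⟩)
      · by_contra! h
        exact (hP hy).2 (mem_iUnion.2 ⟨i, hi.1.trans_le hz.2, h⟩)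
    · exact Or.inl ⟨hK.out (hP hx).1 (hP hy).1 hz, hzU⟩
  calc ENNReal.ofReal (y - x) = volume (Icc x y) := Real.volume_Icc.symm
    _ ≤ volume (K \ ⋃ i, Ioo (a i) (b i)) +
          volume (⋃ i : intervalsBetween a b P, Ioo (a i) (b i)) :=
      (measure_mono hcover).trans (measure_union_le _ _)
    _ ≤ ∑' i : intervalsBetween a b P, volume (Ioo (a i) (b i)) := by
      rw [hnull, zero_add]
      exact measure_iUnion_le _
    _ = ∑' i : intervalsBetween a b P, ENNReal.ofReal (b i - a i) := by
      simp only [Real.volume_Ioo]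

theorem ediam_le_tsum_intervalsBetween [Countable I] {K P : Set ℝ} (hK : K.OrdConnected)
    (hnull : volume (K \ ⋃ i, Ioo (a i) (b i)) = 0) (hP : P ⊆ K \ ⋃ i, Ioo (a i) (b i)) :
    ediam P ≤ ∑' i : intervalsBetween a b P, ENNReal.ofReal (b i - a i) := by
  refine ediam_le fun x hx y hy => ?_
  rw [edist_dist, Real.dist_eq]
  rcases le_total x y with hxy | hyx
  · rw [abs_of_nonpos (sub_nonpos.2 hxy), neg_sub]
    exact ofReal_sub_le_tsum_intervalsBetween hK hnull hP hx hy
  · rw [abs_of_nonneg (sub_nonneg.2 hyx)]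
    exact ofReal_sub_le_tsum_intervalsBetween hK hnull hP hy hx

/-- The pieces of the cover of `K \ ⋃ i, Ioo (a i) (b i)` are the fibres of this map. -/
noncomputable def finsetBelow (b : I → ℝ) (F : Finset I) (x : ℝ) : Finset I :=
  {j ∈ F | b j ≤ x}

theorem finsetBelow_mono (b : I → ℝ) (F : Finset I) : Monotone (finsetBelow b F) :=
  fun _ _ hxy _ hj => by
    rw [finsetBelow, Finset.mem_filter] at hj ⊢
    exact ⟨hj.1, hj.2.trans hxy⟩

theorem intervalsBetween_inter_finsetBelow_preimage_subset (hab : ∀ i, a i < b i) (s : Set ℝ)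
    (F G : Finset I) : intervalsBetween a b (s ∩ finsetBelow b F ⁻¹' {G}) ⊆ {i | i ∉ F} := by
  rintro i ⟨x, hx, y, hy, hxa, hby⟩ hiF
  have hiy : i ∈ finsetBelow b F y := Finset.mem_filter.2 ⟨hiF, hby⟩
  rw [hy.2, ← hx.2] at hiy
  exact (hab i).not_ge ((Finset.mem_filter.1 hiy).2.trans hxa)

theorem pairwise_disjoint_intervalsBetween_inter_finsetBelow_preimage (hab : ∀ i, a i < b i)
    (s : Set ℝ) (F : Finset I) :
    Pairwise (Disjoint on fun G => intervalsBetween a b (s ∩ finsetBelow b F ⁻¹' {G})) := by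
  intro G G' hne
  refine disjoint_left.2 ?_
  rintro i ⟨x, hx, y, hy, hxa, hby⟩ ⟨x', hx', y', hy', hxa', hby'⟩
  refine hne (le_antisymm ?_ ?_)
  · calc G = finsetBelow b F x := hx.2.symm
      _ ≤ finsetBelow b F y' := finsetBelow_mono b F (hxa.trans ((hab i).le.trans hby'))
      _ = G' := hy'.2
  · calc G' = finsetBelow b F x' := hx'.2.symm
      _ ≤ finsetBelow b F y := finsetBelow_mono b F (hxa'.trans ((hab i).le.trans hby))
      _ = G := hy.2

theorem tsum_ediam_inter_finsetBelow_preimage_rpow_le [Countable I] (hab : ∀ i, a i < b i)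
    {K : Set ℝ} (hK : K.OrdConnected) (hnull : volume (K \ ⋃ i, Ioo (a i) (b i)) = 0)
    {q : ℝ} (hq0 : 0 < q) (hq1 : q ≤ 1) (F : Finset I) :
    ∑' G : Finset I, ediam ((K \ ⋃ i, Ioo (a i) (b i)) ∩ finsetBelow b F ⁻¹' {G}) ^ q ≤
      ∑' i : {i // i ∉ F}, ENNReal.ofReal (b i - a i) ^ q :=
  calc ∑' G : Finset I, ediam ((K \ ⋃ i, Ioo (a i) (b i)) ∩ finsetBelow b F ⁻¹' {G}) ^ q
      ≤ ∑' G : Finset I, (∑' i : intervalsBetween a b ((K \ ⋃ i, Ioo (a i) (b i)) ∩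
          finsetBelow b F ⁻¹' {G}), ENNReal.ofReal (b i - a i)) ^ q :=
        ENNReal.tsum_le_tsum fun _ =>
          ENNReal.rpow_le_rpow (ediam_le_tsum_intervalsBetween hK hnull inter_subset_left) hq0.le
    _ ≤ ∑' i : {i // i ∉ F}, ENNReal.ofReal (b i - a i) ^ q :=
        ENNReal.tsum_rpow_tsum_subtype_le (fun i => ENNReal.ofReal (b i - a i))
          (pairwise_disjoint_intervalsBetween_inter_finsetBelow_preimage hab _ F)
          (intervalsBetween_inter_finsetBelow_preimage_subset hab _ F) hq0 hq1

theorem hausdorffMeasure_diff_iUnion_Ioo_eq_zero [Countable I] (hab : ∀ i, a i < b i)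
    {K : Set ℝ} (hK : K.OrdConnected) (hnull : volume (K \ ⋃ i, Ioo (a i) (b i)) = 0)
    {q : ℝ} (hq0 : 0 < q) (hq1 : q ≤ 1)
    (hsum : ∑' i, ENNReal.ofReal (b i - a i) ^ q ≠ ∞) :
    μH[q] (K \ ⋃ i, Ioo (a i) (b i)) = 0 := by
  set S := K \ ⋃ i, Ioo (a i) (b i)
  set tail : Finset I → ℝ≥0∞ := fun F => ∑' i : {i // i ∉ F}, ENNReal.ofReal (b i - a i) ^ q
  have htail : Tendsto tail atTop (𝓝 0) := ENNReal.tendsto_tsum_compl_atTop_zero hsum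
  have hcover := tsum_ediam_inter_finsetBelow_preimage_rpow_le hab hK hnull hq0 hq1
  have hdiam : ∀ F G, ediam (S ∩ finsetBelow b F ⁻¹' {G}) ≤ tail F ^ q⁻¹ := fun F G =>
    (ENNReal.le_rpow_inv_iff hq0).2 ((ENNReal.le_tsum G).trans (hcover F))
  have hr : Tendsto (fun F => tail F ^ q⁻¹) atTop (𝓝 0) := by
    simpa [ENNReal.zero_rpow_of_pos (inv_pos.2 hq0)] using htail.ennrpow_const q⁻¹
  refine nonpos_iff_eq_zero.1 ?_
  calc μH[q] S
      ≤ liminf (fun F => ∑' G : Finset I, ediam (S ∩ finsetBelow b F ⁻¹' {G}) ^ q) atTop :=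
        Measure.hausdorffMeasure_le_liminf_tsum q S _ hr _
          (Eventually.of_forall hdiam)
          (Eventually.of_forall fun F x hx => mem_iUnion.2 ⟨_, hx, rfl⟩)
    _ ≤ liminf tail atTop := liminf_le_liminf (Eventually.of_forall hcover)
    _ = 0 := htail.liminf_eq

end IntervalFamily

theorem hausdorff_dimension_of_singular_set_general
    {I : Type*} [Countable I]
    (T C p : ℝ) (hC : 0 < C) (hp0 : 0 < p) (hp1 : p < 1)
    (a b : I → ℝ) (hab : ∀ i, a i < b i)
    (hsub : ∀ i, Ioo (a i) (b i) ⊆ Ioo 0 T)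
    (hdisj : Pairwise (Function.onFun Disjoint fun i => Ioo (a i) (b i)))
    (h : ℝ → ℝ) (hint : IntegrableOn h (Ioo 0 T))
    (hbound : ∀ i, ∀ t ∈ Ioo (a i) (b i), C * (b i - t) ^ (-p) ≤ 1 + h t)
    (hnull : volume (Icc (0 : ℝ) T \ ⋃ i, Ioo (a i) (b i)) = 0) :
    μH[1 - p] (Icc (0 : ℝ) T \ ⋃ i, Ioo (a i) (b i)) = 0 := by
  have hsum : ∑' i, ENNReal.ofReal (b i - a i) ^ (1 - p) ≠ ∞ :=
    tsum_ofReal_sub_rpow_ne_top hC hp1 hab hsub hdisj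
      ((integrableOn_const measure_Ioo_lt_top.ne).add hint) hbound
  exact hausdorffMeasure_diff_iUnion_Ioo_eq_zero hab ordConnected_Icc hnull (by linarith)
    (by linarith) hsum

/-- Abstract combined form of the paper's main theorem: if pairwise disjoint
intervals `(αᵢ, βᵢ) ⊆ (0,T)` satisfy `C (βᵢ - t)^{-p} ≤ 1 + h(t)` on each
`(αᵢ, βᵢ)` for an integrable nonnegative `h`, and the complement
`S = [0,T] \ ⋃ᵢ (αᵢ, βᵢ)` is Lebesgue-null, then the `(1-p)`-dimensional
Hausdorff measure of `S` is zero. -/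
theorem hausdorff_dimension_of_singular_set
    {I : Type*} [Countable I]
    (T C p : ℝ) (hT : 0 < T) (hC : 0 < C) (hp0 : 0 < p) (hp1 : p < 1)
    (a b : I → ℝ) (hab : ∀ i, a i < b i)
    (hsub : ∀ i, Ioo (a i) (b i) ⊆ Ioo 0 T)
    (hdisj : Pairwise (Function.onFun Disjoint fun i => Ioo (a i) (b i)))
    (h : ℝ → ℝ) (hint : IntegrableOn h (Ioo 0 T))
    (hnonneg : ∀ t ∈ Ioo (0 : ℝ) T, 0 ≤ h t)
    (hbound : ∀ i, ∀ t ∈ Ioo (a i) (b i), C * (b i - t) ^ (-p) ≤ 1 + h t)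
    (hnull : volume (Icc (0 : ℝ) T \ ⋃ i, Ioo (a i) (b i)) = 0) :
    μH[1 - p] (Icc (0 : ℝ) T \ ⋃ i, Ioo (a i) (b i)) = 0 :=
  hausdorff_dimension_of_singular_set_general T C p hC hp0 hp1 a b hab hsub hdisj h hint hbound
    hnull
end
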